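/- arXiv:1602.08379 — 2 statements merged into one kernel-verified Lean document; each statement's English description precedes it below -/
import Mathlib

section
/- Let N be any group and φ an automorphism of N. Consider the double A = (N ⋊_φ ⟨t₁⟩) *_N (N ⋊_φ ⟨t₂⟩) of N ⋊_φ ℤ along N, and the group B = (N ⋊_φ ⟨t⟩) × F₂ where F₂ = ⟨u, v⟩ is free of rank 2. Then the map sending N identically to N ≤ N ⋊ ⟨t⟩, t₁ ↦ tu, and t₂ ↦ tv extends to an injective group homomorphism A → B. -/
open Monoid SemidirectProduct

/-!
Amalgamating the groups `N ⋊_{ψ i} ℤ` along `N` gives `N ⋊ F(ι)`, the generator `i` acting by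
`ψ i`: both have the presentation "`N`, plus one letter per `i` conjugating `N` by `ψ i`". In the
double, `F₂ = F(t₁, t₂)` therefore acts through the augmentation `ε : F₂ → ℤ`, `tᵢ ↦ 1`, so
`N ⋊ F₂` maps to `N ⋊ ℤ` by applying `ε` to the second coordinate. Paired with the projection onto
`F₂` this map is injective, since it keeps both coordinates of an element of `N ⋊ F₂`.
-/

namespace SemidirectProduct

variable {N G H : Type*} [Group N] [Group G] [Group H] {φ : G →* MulAut N}

theorem lift_compat_of_closure_eq_top (f₁ : N →* H) (f₂ : G →* H) {s : Set G}
    (hs : Subgroup.closure s = ⊤) (h : ∀ g ∈ s, ∀ n, f₁ (φ g n) = f₂ g * f₁ n * (f₂ g)⁻¹)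
    (g : G) : f₁.comp (φ g).toMonoidHom = (MulAut.conj (f₂ g)).toMonoidHom.comp f₁ := by
  suffices hg : ∀ n, f₁ (φ g n) = f₂ g * f₁ n * (f₂ g)⁻¹ from MonoidHom.ext hg
  have hmem : g ∈ Subgroup.closure s := hs ▸ Subgroup.mem_top g
  induction hmem using Subgroup.closure_induction with
  | mem g hg => exact h g hg
  | one => simp
  | mul x y _ _ hx hy => intro n; simp [hx, hy, mul_assoc]
  | inv x _ hx =>
    intro n
    have hxn := hx ((φ x)⁻¹ n)
    simp only [MulAut.apply_inv_self] at hxn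
    simp [hxn, mul_assoc]

section MapRight

variable {F : Type*} [Group F] {β : F →* MulAut N} (ε : F →* G) (h : φ.comp ε = β)

def mapRight : N ⋊[β] F →* N ⋊[φ] G :=
  map (MonoidHom.id N) ε fun g => by rw [← h]; rfl

@[simp]
theorem mapRight_inl (n : N) : mapRight ε h (inl n) = inl n :=
  map_inl _ _ _ n

@[simp]
theorem mapRight_comp_inl : (mapRight ε h).comp inl = inl :=
  map_comp_inl _ _ _

@[simp]
theorem mapRight_inr (g : F) : mapRight ε h (inr g) = inr (ε g) :=
  map_inr _ _ _ g

theorem mapRight_prod_rightHom_injective :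
    Function.Injective ((mapRight ε h).prod (rightHom : N ⋊[β] F →* F)) := fun _ _ hxy =>
  SemidirectProduct.ext (congrArg (fun p => p.1.left) hxy) (congrArg Prod.snd hxy)

end MapRight

section Pushout

variable {ι : Type*} (ψ : ι → MulAut N)

theorem freeGroupLift_comp_zpowersHom (i : ι) :
    (FreeGroup.lift ψ).comp (zpowersHom _ (FreeGroup.of i)) = zpowersHom _ (ψ i) :=
  MonoidHom.ext_mint (by simp)

noncomputable def pushoutIToFreeGroup :
    PushoutI (fun i => (inl : N →* N ⋊[zpowersHom _ (ψ i)] Multiplicative ℤ)) →*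
      N ⋊[FreeGroup.lift ψ] FreeGroup ι :=
  PushoutI.lift
    (fun i => mapRight (zpowersHom _ (FreeGroup.of i)) (freeGroupLift_comp_zpowersHom ψ i))
    inl fun _ => mapRight_comp_inl _ _

@[simp]
theorem pushoutIToFreeGroup_of_inl (i : ι) (n : N) :
    pushoutIToFreeGroup ψ (PushoutI.of i (inl n)) = inl n := by
  simp [pushoutIToFreeGroup]

@[simp]
theorem pushoutIToFreeGroup_of_inr (i : ι) :
    pushoutIToFreeGroup ψ (PushoutI.of i (inr (.ofAdd 1))) = inr (FreeGroup.of i) := by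
  simp [pushoutIToFreeGroup]

@[simp]
theorem pushoutIToFreeGroup_base (n : N) :
    pushoutIToFreeGroup ψ (PushoutI.base _ n) = inl n := by
  simp [pushoutIToFreeGroup]

noncomputable def pushoutIOfFreeGroup :
    N ⋊[FreeGroup.lift ψ] FreeGroup ι →*
      PushoutI (fun i => (inl : N →* N ⋊[zpowersHom _ (ψ i)] Multiplicative ℤ)) :=
  lift (PushoutI.base _) (FreeGroup.lift fun i => PushoutI.of i (inr (.ofAdd 1)))
    (lift_compat_of_closure_eq_top _ _ (FreeGroup.closure_range_of ι) (by
      rintro _ ⟨i, rfl⟩ n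
      have hconj := inl_aut (φ := zpowersHom _ (ψ i)) (.ofAdd 1) n
      simp only [zpowersHom_apply, toAdd_ofAdd, zpow_one] at hconj
      simp only [FreeGroup.lift_apply_of, ← PushoutI.of_apply_eq_base _ i, hconj, map_mul,
        map_inv]))

@[simp]
theorem pushoutIOfFreeGroup_inl (n : N) :
    pushoutIOfFreeGroup ψ (inl n) = PushoutI.base _ n := by
  simp [pushoutIOfFreeGroup]

@[simp]
theorem pushoutIOfFreeGroup_inr_of (i : ι) :
    pushoutIOfFreeGroup ψ (inr (FreeGroup.of i)) = PushoutI.of i (inr (.ofAdd 1)) := by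
  simp [pushoutIOfFreeGroup]

noncomputable def pushoutIEquivFreeGroup :
    PushoutI (fun i => (inl : N →* N ⋊[zpowersHom _ (ψ i)] Multiplicative ℤ)) ≃*
      N ⋊[FreeGroup.lift ψ] FreeGroup ι :=
  MonoidHom.toMulEquiv (pushoutIToFreeGroup ψ) (pushoutIOfFreeGroup ψ)
    (PushoutI.hom_ext
      (fun i => hom_ext (MonoidHom.ext fun n => by simp [← PushoutI.of_apply_eq_base _ i])
        (MonoidHom.ext_mint (by simp)))
      (MonoidHom.ext fun n => by simp))
    (hom_ext (MonoidHom.ext fun n => by simp) (FreeGroup.ext_hom _ _ fun i => by simp))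

end Pushout

end SemidirectProduct

/-- Let `N` be a group with automorphism `φ`.  The double
`A = (N ⋊_φ ⟨t₁⟩) *_N (N ⋊_φ ⟨t₂⟩)` of `N ⋊_φ ℤ` along `N` embeds into
`B = (N ⋊_φ ⟨t⟩) × F₂`, where `F₂ = ⟨u, v⟩` is free of rank 2, via the map sending
`N` identically to `N`, `t₁ ↦ tu`, and `t₂ ↦ tv`. -/
theorem bieri_double_embedding
    (N : Type) [Group N] (φ : MulAut N) :
    letI H := N ⋊[zpowersHom (MulAut N) φ] Multiplicative ℤ
    letI t : H := SemidirectProduct.inr (Multiplicative.ofAdd (1 : ℤ))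
    ∃ Φ : Monoid.PushoutI (fun _ : Fin 2 => (SemidirectProduct.inl : N →* H)) →*
        H × FreeGroup Bool,
      Function.Injective Φ ∧
      (∀ (i : Fin 2) (n : N),
        Φ (Monoid.PushoutI.of (φ := fun _ : Fin 2 => (SemidirectProduct.inl : N →* H)) i
            (SemidirectProduct.inl n)) = (SemidirectProduct.inl n, 1)) ∧
      Φ (Monoid.PushoutI.of (φ := fun _ : Fin 2 => (SemidirectProduct.inl : N →* H)) 0 t) =
          (t, FreeGroup.of true) ∧
      Φ (Monoid.PushoutI.of (φ := fun _ : Fin 2 => (SemidirectProduct.inl : N →* H)) 1 t) =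
          (t, FreeGroup.of false) := by
  let ε : FreeGroup (Fin 2) →* Multiplicative ℤ := FreeGroup.lift fun _ => .ofAdd 1
  have hε : (zpowersHom (MulAut N) φ).comp ε = FreeGroup.lift fun _ => φ :=
    FreeGroup.ext_hom _ _ fun _ => by simp [ε]
  -- `0 ↦ true`, `1 ↦ false`
  let e : Fin 2 ≃ Bool := finTwoEquiv.trans Equiv.boolNot
  let Φ := (MonoidHom.prodMap (MonoidHom.id _) (FreeGroup.freeGroupCongr e).toMonoidHom).comp
    (((mapRight ε hε).prod rightHom).comp (pushoutIToFreeGroup fun _ => φ))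
  refine ⟨Φ, ?_, fun _ _ => ?_, ?_, ?_⟩
  · exact (Function.injective_id.prodMap (FreeGroup.freeGroupCongr e).injective).comp
      ((mapRight_prod_rightHom_injective ε hε).comp (pushoutIEquivFreeGroup _).injective)
  all_goals simp [Φ, ε, e, finTwoEquiv]
end

section
/- Let φ(x) = xyx, φ(y) = x in the free group ⟨x,y⟩, and assign weights d₁ = 1+√2 to x^{±1} and d₂ = 1 to y^{±1}, giving weighted length ‖w‖ = d₁|w|_x + d₂|w|_y. Then for every freely reduced word w, the freely reduced representative v of φ(w) satisfies ‖v‖ = (1+√2)·‖w‖ whenever w is a positive word (no free reduction occurs), and in general ‖v‖ ≤ (1+√2)·‖w‖. -/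
/-- A letter of a word in `⟨x,y⟩`: first component the generator (`true` = `x`,
`false` = `y`), second component the sign. -/
abbrev Letter := Bool × Bool

/-- The formal inverse of a word. -/
def invWord (w : List Letter) : List Letter :=
  (w.map fun p => (p.1, !p.2)).reverse

/-- Substitution of the words `fx`, `fy` for the letters `x^{±1}`, `y^{±1}`. -/
def substWord (fx fy : List Letter) (w : List Letter) : List Letter :=
  (w.map fun p =>
    if p.2 then (if p.1 then fx else fy) else invWord (if p.1 then fx else fy)).flatten

/-- The number of occurrences of `x^{±1}` in a word. -/
def countX (w : List Letter) : ℕ := (w.filter fun p => p.1).length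

/-- The number of occurrences of `y^{±1}` in a word. -/
def countY (w : List Letter) : ℕ := (w.filter fun p => !p.1).length

/-- The weighted length with weight `d₁` on `x^{±1}` and `d₂` on `y^{±1}`. -/
def wlen (d₁ d₂ : ℝ) (w : List Letter) : ℝ := d₁ * countX w + d₂ * countY w

/-- The word `φ(x) = xyx`. -/
def phiX : List Letter := [(true, true), (false, true), (true, true)]

/-- The word `φ(y) = x`. -/
def phiY : List Letter := [(true, true)]

/-- A word is positive if it has no occurrences of `x⁻¹` or `y⁻¹`. -/
def PositiveWord (w : List Letter) : Prop := ∀ p ∈ w, p.2 = true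

/-!
Before free reduction, the weighted length of `φ(w)` depends only on the letter counts of `w`,
through the abelianization matrix `[[2,1],[1,0]]` of `φ`; since `(1+√2, 1)` is a left eigenvector
of it for the eigenvalue `1+√2`, the weighted length is multiplied exactly by `1+√2`. Free
reduction only deletes letters, so it can only shorten, and positive words are already reduced.
-/

section WeightedLength

variable {d₁ d₂ : ℝ} {fx fy u v w : List Letter}

lemma countX_append : countX (u ++ v) = countX u + countX v := by
  simp [countX]

lemma countY_append : countY (u ++ v) = countY u + countY v := by
  simp [countY]

@[simp]
lemma countX_invWord : countX (invWord w) = countX w := by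
  simp [countX, invWord, List.filter_map, Function.comp_def]

@[simp]
lemma countY_invWord : countY (invWord w) = countY w := by
  simp [countY, invWord, List.filter_map, Function.comp_def]

lemma substWord_cons (p : Letter) :
    substWord fx fy (p :: w) =
      (if p.2 then (if p.1 then fx else fy) else invWord (if p.1 then fx else fy)) ++
        substWord fx fy w :=
  rfl

lemma countX_substWord :
    countX (substWord fx fy w) = countX fx * countX w + countX fy * countY w := by
  induction w with
  | nil => rfl
  | cons p w ih =>
    obtain ⟨_ | _, _ | _⟩ := p <;>
      simp [substWord_cons, countX_append, ih] <;> simp [countX, countY] <;> ring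

lemma countY_substWord :
    countY (substWord fx fy w) = countY fx * countX w + countY fy * countY w := by
  induction w with
  | nil => rfl
  | cons p w ih =>
    obtain ⟨_ | _, _ | _⟩ := p <;>
      simp [substWord_cons, countY_append, ih] <;> simp [countX, countY] <;> ring

lemma wlen_substWord :
    wlen d₁ d₂ (substWord fx fy w) = wlen d₁ d₂ fx * countX w + wlen d₁ d₂ fy * countY w := by
  simp only [wlen, countX_substWord, countY_substWord]
  push_cast
  ring

lemma wlen_substWord_of_eigen {c : ℝ} (hfx : wlen d₁ d₂ fx = c * d₁)
    (hfy : wlen d₁ d₂ fy = c * d₂) :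
    wlen d₁ d₂ (substWord fx fy w) = c * wlen d₁ d₂ w := by
  rw [wlen_substWord, hfx, hfy, wlen]
  ring

lemma wlen_le_of_sublist (h₁ : 0 ≤ d₁) (h₂ : 0 ≤ d₂) (h : u.Sublist v) :
    wlen d₁ d₂ u ≤ wlen d₁ d₂ v := by
  have hx : (countX u : ℝ) ≤ countX v := by
    exact_mod_cast (h.filter _).length_le
  have hy : (countY u : ℝ) ≤ countY v := by
    exact_mod_cast (h.filter _).length_le
  unfold wlen
  gcongr

lemma wlen_reduce_le (h₁ : 0 ≤ d₁) (h₂ : 0 ≤ d₂) :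
    wlen d₁ d₂ (FreeGroup.reduce w) ≤ wlen d₁ d₂ w :=
  wlen_le_of_sublist h₁ h₂ FreeGroup.reduce.red.sublist

end WeightedLength

namespace PositiveWord

variable {fx fy w : List Letter}

lemma substWord (hfx : PositiveWord fx) (hfy : PositiveWord fy) (hw : PositiveWord w) :
    PositiveWord (substWord fx fy w) := by
  intro p hp
  simp only [_root_.substWord, List.mem_flatten, List.mem_map] at hp
  obtain ⟨l, ⟨q, hq, rfl⟩, hpl⟩ := hp
  rw [hw q hq, if_pos rfl] at hpl
  split at hpl
  exacts [hfx p hpl, hfy p hpl]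

lemma reduce_eq (hw : PositiveWord w) : FreeGroup.reduce w = w := by
  induction w with
  | nil => rfl
  | cons p w ih =>
    rw [FreeGroup.reduce.cons, ih fun q hq => hw q (List.mem_cons_of_mem _ hq)]
    cases w with
    | nil => rfl
    | cons q w =>
      have hp := hw p List.mem_cons_self
      have hq := hw q (List.mem_cons_of_mem _ List.mem_cons_self)
      simp [hp, hq]

end PositiveWord

lemma positiveWord_phiX : PositiveWord phiX := by
  simp [PositiveWord, phiX]

lemma positiveWord_phiY : PositiveWord phiY := by
  simp [PositiveWord, phiY]

lemma wlen_phiX : wlen (1 + √2) 1 phiX = (1 + √2) * (1 + √2) := by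
  have h : √2 * √2 = 2 := Real.mul_self_sqrt zero_le_two
  rw [wlen, show countX phiX = 2 from rfl, show countY phiX = 1 from rfl]
  push_cast
  linear_combination -h

lemma wlen_phiY : wlen (1 + √2) 1 phiY = (1 + √2) * 1 := by
  simp [wlen, countX, countY, phiY]

theorem weighted_length_phi_general (w : List Letter) :
    (PositiveWord w →
      FreeGroup.reduce (substWord phiX phiY w) = substWord phiX phiY w ∧
      wlen (1 + Real.sqrt 2) 1 (FreeGroup.reduce (substWord phiX phiY w)) =
        (1 + Real.sqrt 2) * wlen (1 + Real.sqrt 2) 1 w) ∧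
    wlen (1 + Real.sqrt 2) 1 (FreeGroup.reduce (substWord phiX phiY w)) ≤
      (1 + Real.sqrt 2) * wlen (1 + Real.sqrt 2) 1 w := by
  have hscale : wlen (1 + √2) 1 (substWord phiX phiY w) = (1 + √2) * wlen (1 + √2) 1 w :=
    wlen_substWord_of_eigen wlen_phiX wlen_phiY
  refine ⟨fun hw => ?_, ?_⟩
  · have hred := (PositiveWord.substWord positiveWord_phiX positiveWord_phiY hw).reduce_eq
    exact ⟨hred, by rw [hred, hscale]⟩
  · rw [← hscale]
    exact wlen_reduce_le (by positivity) zero_le_one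

/-- For `φ(x) = xyx`, `φ(y) = x` and weights `d₁ = 1+√2`, `d₂ = 1`: for every freely
reduced word `w`, the freely reduced representative `v` of `φ(w)` satisfies
`‖v‖ = (1+√2)·‖w‖` when `w` is positive (no free reduction occurs), and in general
`‖v‖ ≤ (1+√2)·‖w‖`. -/
theorem weighted_length_phi (w : List Letter) (hw : FreeGroup.reduce w = w) :
    (PositiveWord w →
      FreeGroup.reduce (substWord phiX phiY w) = substWord phiX phiY w ∧
      wlen (1 + Real.sqrt 2) 1 (FreeGroup.reduce (substWord phiX phiY w)) =
        (1 + Real.sqrt 2) * wlen (1 + Real.sqrt 2) 1 w) ∧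
    wlen (1 + Real.sqrt 2) 1 (FreeGroup.reduce (substWord phiX phiY w)) ≤
      (1 + Real.sqrt 2) * wlen (1 + Real.sqrt 2) 1 w :=
  weighted_length_phi_general w
end
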